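/- arXiv:2410.07870 — 2 statements merged into one kernel-verified Lean document; each statement's English description precedes it below -/
import Mathlib

section
/- Let f = (1/N)∑_{i=1}^N f_i. If the strong growth condition holds with constant ρ_1 for batch size 1, i.e. (1/N)∑_{i=1}^N ‖∇f_i(x)‖² ≤ ρ_1 ‖∇f(x)‖² for all x, then for every batch size K with 1 ≤ K ≤ N, the strong growth condition holds with some constant ρ_K satisfying ρ_K ≤ (1/(K(N−1)))·(ρ_1(N−K) + (K−1)N). -/
open Finset RealInnerProductSpace

/-!
Expanding `‖∑ i ∈ B, g i‖²` into inner products and summing over all `K`-subsets `B`, the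
coefficient of `⟪g i, g j⟫` is the number of `K`-subsets containing both `i` and `j`:
`(N-1 choose K-1)` on the diagonal and `(N-2 choose K-2)` off it. Hence the mean of
`‖K⁻¹ ∑_{i∈B} g i‖²` over batches equals
`(N-K)/(K(N-1)) · (N⁻¹ ∑ ‖g i‖²) + N(K-1)/(K(N-1)) · ‖N⁻¹ ∑ g i‖²`, and bounding the first
term by the batch-size-one strong growth condition gives `ρ_K`, applied to `g i = ∇fᵢ(x)`.
-/

section Gradient

variable {F : Type*} [NormedAddCommGroup F] [InnerProductSpace ℝ F] [CompleteSpace F] {x : F}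

theorem HasGradientAt.fun_sum {ι : Type*} {s : Finset ι} {f : ι → F → ℝ} {f' : ι → F}
    (h : ∀ i ∈ s, HasGradientAt (f i) (f' i) x) :
    HasGradientAt (fun y => ∑ i ∈ s, f i y) (∑ i ∈ s, f' i) x := by
  rw [hasGradientAt_iff_hasFDerivAt, map_sum]
  exact HasFDerivAt.fun_sum fun i hi => (h i hi).hasFDerivAt

theorem HasGradientAt.const_mul {f : F → ℝ} {f' : F} (h : HasGradientAt f f' x) (c : ℝ) :
    HasGradientAt (fun y => c * f y) (c • f') x := by
  rw [hasGradientAt_iff_hasFDerivAt, map_smul]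
  exact h.hasFDerivAt.const_mul c

end Gradient

theorem Nat.descFactorial_mul_choose_sub {n k s : ℕ} (hsk : s ≤ k) :
    n.descFactorial s * (n - s).choose (k - s) = k.descFactorial s * n.choose k := by
  simp only [descFactorial_eq_factorial_mul_choose, Nat.mul_assoc, ← choose_mul hsk]
  ring

-- Multiplied out so that it also holds, as `0 = 0`, when `n < #s`.
theorem Finset.descFactorial_mul_card_filter_powersetCard_subset {α : Type*} [DecidableEq α]
    {s t : Finset α} (hst : s ⊆ t) (n : ℕ) :
    (#t).descFactorial #s * #{x ∈ powersetCard n t | s ⊆ x}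
      = n.descFactorial #s * (#t).choose n := by
  rcases le_or_gt #s n with hsn | hns
  · rw [card_filter_powersetCard_subset s t n hst hsn, Nat.descFactorial_mul_choose_sub hsn]
  · have hempty : {x ∈ powersetCard n t | s ⊆ x} = ∅ :=
      filter_false_of_mem fun x hx hsx =>
        (card_le_card hsx).not_gt ((mem_powersetCard.1 hx).2 ▸ hns)
    rw [hempty, Nat.descFactorial_eq_zero_iff_lt.2 hns, card_empty, Nat.mul_zero, Nat.zero_mul]

theorem norm_sum_sq_eq_sum_sum_inner {ι E : Type*} [NormedAddCommGroup E]
    [InnerProductSpace ℝ E] (s : Finset ι) (g : ι → E) :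
    ‖∑ i ∈ s, g i‖ ^ 2 = ∑ i ∈ s, ∑ j ∈ s, ⟪g i, g j⟫ := by
  rw [← real_inner_self_eq_norm_sq, sum_inner]
  simp_rw [inner_sum]

section Minibatch

variable {ι : Type*} [Fintype ι] [DecidableEq ι]
  {E : Type*} [NormedAddCommGroup E] [InnerProductSpace ℝ E]

theorem sum_norm_sq_sum_eq_sum_card_mul_inner (𝒜 : Finset (Finset ι)) (g : ι → E) :
    ∑ B ∈ 𝒜, ‖∑ i ∈ B, g i‖ ^ 2
      = ∑ i, ∑ j, (#{B ∈ 𝒜 | i ∈ B ∧ j ∈ B} : ℝ) * ⟪g i, g j⟫ := by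
  calc ∑ B ∈ 𝒜, ‖∑ i ∈ B, g i‖ ^ 2
      = ∑ B ∈ 𝒜, ∑ i, ∑ j, if i ∈ B ∧ j ∈ B then ⟪g i, g j⟫ else 0 := by
        refine sum_congr rfl fun B _ => ?_
        simp [norm_sum_sq_eq_sum_sum_inner, ite_and]
    _ = ∑ i, ∑ j, ∑ B ∈ 𝒜, if i ∈ B ∧ j ∈ B then ⟪g i, g j⟫ else 0 := by
        rw [sum_comm]
        exact sum_congr rfl fun i _ => sum_comm
    _ = _ := by simp_rw [natCast_card_filter, sum_mul, ite_mul, one_mul, zero_mul]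

theorem cast_card_mul_card_filter_mem_powersetCard (K : ℕ) (i j : ι) :
    (Fintype.card ι : ℝ) * (Fintype.card ι - 1) * #{B ∈ powersetCard K univ | i ∈ B ∧ j ∈ B}
      = K * (Fintype.card ι).choose K *
          ((Fintype.card ι - K) * (if i = j then 1 else 0) + (K - 1)) := by
  rcases eq_or_ne i j with rfl | hij
  · have h := descFactorial_mul_card_filter_powersetCard_subset (subset_univ {i}) K
    simp only [card_singleton, Nat.descFactorial_one, card_univ, singleton_subset_iff] at h
    simp only [and_self, if_true, mul_one]
    rw [mul_right_comm, ← Nat.cast_mul, h]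
    push_cast
    ring
  · have h := descFactorial_mul_card_filter_powersetCard_subset (subset_univ {i, j}) K
    rw [card_pair hij, card_univ] at h
    simp only [insert_subset_iff, singleton_subset_iff] at h
    simp only [hij, if_false, mul_zero, zero_add]
    rw [← Nat.cast_descFactorial_two, ← Nat.cast_mul, h]
    push_cast [Nat.cast_descFactorial_two]
    ring

theorem card_mul_sum_powersetCard_norm_sq_sum (K : ℕ) (g : ι → E) :
    (Fintype.card ι : ℝ) * (Fintype.card ι - 1) *
        ∑ B ∈ powersetCard K univ, ‖∑ i ∈ B, g i‖ ^ 2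
      = K * (Fintype.card ι).choose K *
          ((Fintype.card ι - K) * ∑ i, ‖g i‖ ^ 2 + (K - 1) * ‖∑ i, g i‖ ^ 2) := by
  rw [sum_norm_sq_sum_eq_sum_card_mul_inner, norm_sum_sq_eq_sum_sum_inner]
  simp_rw [mul_sum, ← mul_assoc, cast_card_mul_card_filter_mem_powersetCard]
  simp only [mul_add, add_mul, sum_add_distrib, mul_assoc, ← mul_sum, ite_mul, one_mul,
    zero_mul, mul_ite, mul_zero, sum_ite_eq, mem_univ, if_true, real_inner_self_eq_norm_sq]

theorem average_norm_sq_smul_sum_powersetCard {K : ℕ} (hN : 2 ≤ Fintype.card ι) (hK : 1 ≤ K)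
    (hKN : K ≤ Fintype.card ι) (g : ι → E) :
    ((Fintype.card ι).choose K : ℝ)⁻¹ *
        ∑ B ∈ powersetCard K univ, ‖(K : ℝ)⁻¹ • ∑ i ∈ B, g i‖ ^ 2
      = (Fintype.card ι - K) / (K * (Fintype.card ι - 1)) *
            ((Fintype.card ι : ℝ)⁻¹ * ∑ i, ‖g i‖ ^ 2)
        + (K - 1) * Fintype.card ι / (K * (Fintype.card ι - 1)) *
            ‖(Fintype.card ι : ℝ)⁻¹ • ∑ i, g i‖ ^ 2 := by
  have hN' : (2 : ℝ) ≤ Fintype.card ι := by exact_mod_cast hN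
  have hK' : (1 : ℝ) ≤ K := by exact_mod_cast hK
  have hN1 : (Fintype.card ι : ℝ) - 1 ≠ 0 := by linarith
  have hC : ((Fintype.card ι).choose K : ℝ) ≠ 0 := by exact_mod_cast (Nat.choose_pos hKN).ne'
  have h := card_mul_sum_powersetCard_norm_sq_sum K g
  simp only [norm_smul, mul_pow, Real.norm_eq_abs, sq_abs, ← mul_sum]
  field_simp
  linear_combination h

theorem average_norm_sq_smul_sum_powersetCard_le {K : ℕ} (hN : 2 ≤ Fintype.card ι)
    (hK : 1 ≤ K) (hKN : K ≤ Fintype.card ι) (g : ι → E) {ρ₁ : ℝ}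
    (hρ₁ : (Fintype.card ι : ℝ)⁻¹ * ∑ i, ‖g i‖ ^ 2
      ≤ ρ₁ * ‖(Fintype.card ι : ℝ)⁻¹ • ∑ i, g i‖ ^ 2) :
    ((Fintype.card ι).choose K : ℝ)⁻¹ *
        ∑ B ∈ powersetCard K univ, ‖(K : ℝ)⁻¹ • ∑ i ∈ B, g i‖ ^ 2
      ≤ ((K : ℝ) * (Fintype.card ι - 1))⁻¹ * (ρ₁ * (Fintype.card ι - K) + (K - 1) * Fintype.card ι)
          * ‖(Fintype.card ι : ℝ)⁻¹ • ∑ i, g i‖ ^ 2 := by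
  have hN' : (2 : ℝ) ≤ Fintype.card ι := by exact_mod_cast hN
  have hK' : (1 : ℝ) ≤ K := by exact_mod_cast hK
  have hKN' : (K : ℝ) ≤ Fintype.card ι := by exact_mod_cast hKN
  have hcoef : 0 ≤ (Fintype.card ι - K : ℝ) / (K * (Fintype.card ι - 1)) :=
    div_nonneg (by linarith) (mul_nonneg (by linarith) (by linarith))
  rw [average_norm_sq_smul_sum_powersetCard hN hK hKN]
  calc _ ≤ (Fintype.card ι - K) / (K * (Fintype.card ι - 1)) *
            (ρ₁ * ‖(Fintype.card ι : ℝ)⁻¹ • ∑ i, g i‖ ^ 2)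
        + (K - 1) * Fintype.card ι / (K * (Fintype.card ι - 1)) *
            ‖(Fintype.card ι : ℝ)⁻¹ • ∑ i, g i‖ ^ 2 := by gcongr
    _ = _ := by ring

end Minibatch

/-- If the strong growth condition holds for batch size `1` with constant `ρ₁`, then for
every batch size `K` it holds with some constant
`ρ_K ≤ (ρ₁(N-K) + (K-1)N) / (K(N-1))`. -/
theorem stmt5 {d N : ℕ} (hN : 2 ≤ N)
    (f : Fin N → EuclideanSpace ℝ (Fin d) → ℝ)
    (hdiff : ∀ i, Differentiable ℝ (f i))
    (ρ₁ : ℝ)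
    (hsgc1 : ∀ x : EuclideanSpace ℝ (Fin d),
      (N : ℝ)⁻¹ * ∑ i : Fin N, ‖gradient (f i) x‖ ^ 2
        ≤ ρ₁ * ‖gradient (fun y => (N : ℝ)⁻¹ * ∑ i, f i y) x‖ ^ 2) :
    ∀ K : ℕ, 1 ≤ K → K ≤ N → ∃ ρK : ℝ,
      ρK ≤ ((K : ℝ) * ((N : ℝ) - 1))⁻¹ * (ρ₁ * ((N : ℝ) - K) + ((K : ℝ) - 1) * N) ∧
      ∀ x : EuclideanSpace ℝ (Fin d),
        ((N.choose K : ℝ))⁻¹ *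
          ∑ B ∈ Finset.powersetCard K (Finset.univ : Finset (Fin N)),
            ‖(K : ℝ)⁻¹ • ∑ i ∈ B, gradient (f i) x‖ ^ 2
        ≤ ρK * ‖gradient (fun y => (N : ℝ)⁻¹ * ∑ i, f i y) x‖ ^ 2 := by
  intro K hK hKN
  refine ⟨_, le_rfl, fun x => ?_⟩
  have hgrad : gradient (fun y => (N : ℝ)⁻¹ * ∑ i, f i y) x
      = (N : ℝ)⁻¹ • ∑ i, gradient (f i) x :=
    ((HasGradientAt.fun_sum fun i _ => (hdiff i x).hasGradientAt).const_mul _).gradient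
  have hρ₁ := hsgc1 x
  rw [hgrad] at hρ₁ ⊢
  have hbatch := average_norm_sq_smul_sum_powersetCard_le (ι := Fin N) (K := K)
    (g := fun i => gradient (f i) x) (ρ₁ := ρ₁)
  simp only [Fintype.card_fin] at hbatch
  exact hbatch hN hK hKN hρ₁
end

section
/- Let f = (1/N)∑_{i=1}^N f_i with 1 ≤ K < N. If the strong growth condition holds with constant ρ_K for batch size K, then the strong growth condition holds for batch size 1 with constant ρ_1 ≤ (Kρ_K(N−1) − N(K−1))/(N−K). -/
/-!
Expanding `‖∑ i ∈ B, g i‖²` into inner products `⟪g i, g j⟫` and counting, for each pair `(i, j)`,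
the `K`-subsets `B` that contain both (`C(N-1, K-1)` if `i = j`, `C(N-2, K-2)` otherwise) gives the
variance formula for sampling without replacement:
`E_B ‖K⁻¹ ∑_{i ∈ B} g i‖² = ((N - K) · N⁻¹ ∑ ‖g i‖² + N (K - 1) ‖N⁻¹ ∑ g i‖²) / (K (N - 1))`.
With `g i = ∇ fᵢ x`, the strong growth inequality for batch size `K` then solves to the stated
bound on `N⁻¹ ∑ ‖∇ fᵢ x‖²`.
-/

open Finset RealInnerProductSpace

section Counting

variable {α : Type*} [Fintype α] [DecidableEq α]

theorem card_powersetCard_univ_superset_mul_choose (s : Finset α) (K : ℕ) :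
    #{B ∈ powersetCard K univ | s ⊆ B} * (Fintype.card α).choose #s
      = (Fintype.card α).choose K * K.choose #s := by
  rcases le_or_gt #s K with hsK | hKs
  · rw [card_filter_powersetCard_subset s univ K (subset_univ s) hsK, Finset.card_univ, mul_comm,
      Nat.choose_mul hsK]
  · have hempty : {B ∈ powersetCard K (univ : Finset α) | s ⊆ B} = ∅ :=
      filter_false_of_mem fun B hB hsB =>
        hKs.not_ge ((card_le_card hsB).trans_eq (mem_powersetCard_univ.1 hB))
    rw [hempty, Nat.choose_eq_zero_of_lt hKs, card_empty, zero_mul, mul_zero]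

theorem card_powersetCard_univ_superset_mul_descFactorial (s : Finset α) (K : ℕ) :
    #{B ∈ powersetCard K univ | s ⊆ B} * (Fintype.card α).descFactorial #s
      = (Fintype.card α).choose K * K.descFactorial #s := by
  simp only [Nat.descFactorial_eq_factorial_mul_choose]
  rw [mul_left_comm, card_powersetCard_univ_superset_mul_choose, mul_left_comm]

theorem sum_powersetCard_sum_sum {M : Type*} [AddCommMonoid M] (K : ℕ) (h : α → α → M) :
    ∑ B ∈ powersetCard K univ, ∑ i ∈ B, ∑ j ∈ B, h i j
      = ∑ i, ∑ j, #{B ∈ powersetCard K univ | {i, j} ⊆ B} • h i j := by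
  have hcount (i j : α) : #{B ∈ powersetCard K univ | {i, j} ⊆ B} • h i j
      = ∑ B ∈ powersetCard K univ, if i ∈ B then (if j ∈ B then h i j else 0) else 0 := by
    rw [← sum_const, sum_filter]
    simp only [insert_subset_iff, singleton_subset_iff, ite_and]
  simp_rw [hcount]
  conv_rhs => enter [2, i]; rw [Finset.sum_comm]
  rw [Finset.sum_comm]
  refine Finset.sum_congr rfl fun B _ => ?_
  simp only [← Fintype.sum_ite_mem B, Finset.sum_ite_irrel, Finset.sum_const_zero]

theorem cast_card_mul_card_sub_one_mul_card_powersetCard_univ_pair_superset (K : ℕ) (i j : α) :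
    (Fintype.card α : ℝ) * (Fintype.card α - 1) * #{B ∈ powersetCard K univ | {i, j} ⊆ B}
      = (Fintype.card α).choose K * K
          * ((Fintype.card α - K) * (if i = j then 1 else 0) + (K - 1)) := by
  have hcount := card_powersetCard_univ_superset_mul_descFactorial {i, j} K
  by_cases hij : i = j
  · subst hij
    rw [pair_eq_singleton, card_singleton, Nat.descFactorial_one, Nat.descFactorial_one] at hcount
    have hcount' := congrArg (Nat.cast : ℕ → ℝ) hcount
    push_cast at hcount'
    rw [pair_eq_singleton, if_pos rfl]
    linear_combination ((Fintype.card α : ℝ) - 1) * hcount'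
  · rw [card_pair hij] at hcount
    have hcount' := congrArg (Nat.cast : ℕ → ℝ) hcount
    push_cast [Nat.cast_descFactorial_two] at hcount'
    rw [if_neg hij]
    linear_combination hcount'

end Counting

theorem card_mul_card_sub_one_mul_sum_powersetCard_norm_sum_sq {α E : Type*} [Fintype α]
    [DecidableEq α] [NormedAddCommGroup E] [InnerProductSpace ℝ E] (K : ℕ) (g : α → E) :
    (Fintype.card α : ℝ) * (Fintype.card α - 1) * ∑ B ∈ powersetCard K univ, ‖∑ i ∈ B, g i‖ ^ 2
      = (Fintype.card α).choose K * K
          * ((Fintype.card α - K) * ∑ i, ‖g i‖ ^ 2 + (K - 1) * ‖∑ i, g i‖ ^ 2) := by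
  have hnorm (s : Finset α) : ‖∑ i ∈ s, g i‖ ^ 2 = ∑ i ∈ s, ∑ j ∈ s, ⟪g i, g j⟫ := by
    rw [← real_inner_self_eq_norm_sq, sum_inner]
    simp only [inner_sum]
  calc (Fintype.card α : ℝ) * (Fintype.card α - 1)
        * ∑ B ∈ powersetCard K univ, ‖∑ i ∈ B, g i‖ ^ 2
      = ∑ i, ∑ j, (Fintype.card α).choose K * K
          * ((Fintype.card α - K) * (if i = j then 1 else 0) + (K - 1)) * ⟪g i, g j⟫ := by
        simp only [hnorm, sum_powersetCard_sum_sum, nsmul_eq_mul, mul_sum, ← mul_assoc,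
          ← cast_card_mul_card_sub_one_mul_card_powersetCard_univ_pair_superset]
    _ = ∑ i, (Fintype.card α).choose K * K * (Fintype.card α - K) * ⟪g i, g i⟫
          + ∑ i, ∑ j, (Fintype.card α).choose K * K * (K - 1) * ⟪g i, g j⟫ := by
        simp only [mul_add, add_mul, sum_add_distrib, mul_ite, ite_mul, mul_one, mul_zero,
          zero_mul, sum_ite_eq, mem_univ, if_true]
    _ = _ := by
        simp only [← mul_sum, hnorm, real_inner_self_eq_norm_sq]
        ring

theorem inv_choose_mul_sum_powersetCard_norm_inv_smul_sum_sq {α E : Type*} [Fintype α]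
    [DecidableEq α] [NormedAddCommGroup E] [InnerProductSpace ℝ E] {K : ℕ} (hK : K ≠ 0)
    (hKN : K ≤ Fintype.card α) (hN : 1 < Fintype.card α) (g : α → E) :
    ((Fintype.card α).choose K : ℝ)⁻¹
        * ∑ B ∈ powersetCard K univ, ‖(K : ℝ)⁻¹ • ∑ i ∈ B, g i‖ ^ 2
      = ((Fintype.card α - K) * ((Fintype.card α : ℝ)⁻¹ * ∑ i, ‖g i‖ ^ 2)
          + Fintype.card α * (K - 1) * ‖(Fintype.card α : ℝ)⁻¹ • ∑ i, g i‖ ^ 2)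
        / (K * (Fintype.card α - 1)) := by
  have hC : ((Fintype.card α).choose K : ℝ) ≠ 0 := by exact_mod_cast (Nat.choose_pos hKN).ne'
  have hN' : (Fintype.card α : ℝ) - 1 ≠ 0 := sub_ne_zero.2 (by exact_mod_cast hN.ne')
  have key := card_mul_card_sub_one_mul_sum_powersetCard_norm_sum_sq K g
  simp only [norm_smul, mul_pow, norm_inv, Real.norm_natCast, ← mul_sum] at key ⊢
  field_simp
  linear_combination key

theorem gradient_const_mul_sum {ι F : Type*} [NormedAddCommGroup F] [InnerProductSpace ℝ F]
    [CompleteSpace F] {x : F} (c : ℝ) (s : Finset ι) {f : ι → F → ℝ}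
    (hf : ∀ i ∈ s, DifferentiableAt ℝ (f i) x) :
    gradient (fun y => c * ∑ i ∈ s, f i y) x = c • ∑ i ∈ s, gradient (f i) x := by
  simp only [gradient, fderiv_const_mul (DifferentiableAt.fun_sum hf), fderiv_fun_sum hf,
    map_smul, map_sum]

theorem stmt6_general {d N : ℕ} (K : ℕ) (hK1 : 1 ≤ K) (hKN : K < N)
    (f : Fin N → EuclideanSpace ℝ (Fin d) → ℝ)
    (hdiff : ∀ i, Differentiable ℝ (f i))
    (ρK : ℝ)
    (hsgcK : ∀ x : EuclideanSpace ℝ (Fin d),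
      ((N.choose K : ℝ))⁻¹ *
          ∑ B ∈ Finset.powersetCard K (Finset.univ : Finset (Fin N)),
            ‖(K : ℝ)⁻¹ • ∑ i ∈ B, gradient (f i) x‖ ^ 2
        ≤ ρK * ‖gradient (fun y => (N : ℝ)⁻¹ * ∑ i, f i y) x‖ ^ 2) :
    ∃ ρ₁ : ℝ,
      ρ₁ ≤ ((K : ℝ) * ρK * ((N : ℝ) - 1) - (N : ℝ) * ((K : ℝ) - 1)) / ((N : ℝ) - K) ∧
      ∀ x : EuclideanSpace ℝ (Fin d),
        (N : ℝ)⁻¹ * ∑ i : Fin N, ‖gradient (f i) x‖ ^ 2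
          ≤ ρ₁ * ‖gradient (fun y => (N : ℝ)⁻¹ * ∑ i, f i y) x‖ ^ 2 := by
  refine ⟨_, le_rfl, fun x => ?_⟩
  have hbatch := inv_choose_mul_sum_powersetCard_norm_inv_smul_sum_sq (α := Fin N) (K := K)
    (by omega) (by rw [Fintype.card_fin]; exact hKN.le) (by rw [Fintype.card_fin]; omega)
    fun i => gradient (f i) x
  have hgrad := gradient_const_mul_sum (x := x) (N : ℝ)⁻¹ univ
    fun i _ => (hdiff i).differentiableAt
  have hsgc := hsgcK x
  simp only [Fintype.card_fin] at hbatch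
  rw [hbatch, ← hgrad] at hsgc
  have hK : (1 : ℝ) ≤ K := by exact_mod_cast hK1
  have hNK : (K : ℝ) < N := by exact_mod_cast hKN
  rw [div_le_iff₀ (mul_pos (by linarith) (by linarith))] at hsgc
  rw [div_mul_eq_mul_div, le_div_iff₀ (by linarith)]
  linear_combination hsgc

/-- Reciprocal of the batch-size lemma: if the strong growth condition holds with
constant `ρ_K` for batch size `K < N`, then it holds for batch size `1` with some
constant `ρ₁ ≤ (Kρ_K(N-1) - N(K-1)) / (N-K)`. -/
theorem stmt6 {d N : ℕ} (hN : 2 ≤ N) (K : ℕ) (hK1 : 1 ≤ K) (hKN : K < N)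
    (f : Fin N → EuclideanSpace ℝ (Fin d) → ℝ)
    (hdiff : ∀ i, Differentiable ℝ (f i))
    (ρK : ℝ)
    (hsgcK : ∀ x : EuclideanSpace ℝ (Fin d),
      ((N.choose K : ℝ))⁻¹ *
          ∑ B ∈ Finset.powersetCard K (Finset.univ : Finset (Fin N)),
            ‖(K : ℝ)⁻¹ • ∑ i ∈ B, gradient (f i) x‖ ^ 2
        ≤ ρK * ‖gradient (fun y => (N : ℝ)⁻¹ * ∑ i, f i y) x‖ ^ 2) :
    ∃ ρ₁ : ℝ,
      ρ₁ ≤ ((K : ℝ) * ρK * ((N : ℝ) - 1) - (N : ℝ) * ((K : ℝ) - 1)) / ((N : ℝ) - K) ∧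
      ∀ x : EuclideanSpace ℝ (Fin d),
        (N : ℝ)⁻¹ * ∑ i : Fin N, ‖gradient (f i) x‖ ^ 2
          ≤ ρ₁ * ‖gradient (fun y => (N : ℝ)⁻¹ * ∑ i, f i y) x‖ ^ 2 :=
  stmt6_general K hK1 hKN f hdiff ρK hsgcK
end
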